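/- Let a, b, c, x, y, χ be complex numbers with b and c not nonpositive integers. Then Ψ₂(a;b,c; x, y+χ) = Σ_{ℓ=0}^∞ ((a)_ℓ / (ℓ! (c)_ℓ)) Ψ₂(a+ℓ;b,c+ℓ;x,y) χ^ℓ, the series converging for all χ ∈ ℂ. -/

import Mathlib

open Complex

/-- Pochhammer symbol `(q)_n = q (q+1) ⋯ (q+n-1)`. -/
noncomputable def poch (q : ℂ) (n : ℕ) : ℂ := (ascPochhammer ℂ n).eval q

/-- Confluent hypergeometric function `₁F₁(a; b; x) = ∑ₛ (a)ₛ xˢ / (s! (b)ₛ)`. -/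
noncomputable def oneF1 (a b x : ℂ) : ℂ :=
  ∑' s : ℕ, poch a s * x ^ s / ((s.factorial : ℂ) * poch b s)

/-- Humbert function `Ψ₂(a; b, c; x, y) = ∑ₘ,ₙ (a)ₘ₊ₙ xᵐ yⁿ / (m! n! (b)ₘ (c)ₙ)`. -/
noncomputable def psi2 (a b c x y : ℂ) : ℂ :=
  ∑' p : ℕ × ℕ, poch a (p.1 + p.2) * x ^ p.1 * y ^ p.2 /
    ((p.1.factorial : ℂ) * (p.2.factorial : ℂ) * poch b p.1 * poch c p.2)

lemma poch_zero' (q : ℂ) : poch q 0 = 1 := by simp [poch]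

lemma poch_succ (q : ℂ) (n : ℕ) : poch q (n + 1) = poch q n * (q + n) := by
  simp [poch, ascPochhammer_succ_right]

lemma poch_add (q : ℂ) (n m : ℕ) : poch q (n + m) = poch q n * poch (q + n) m := by
  induction m with
  | zero => simp [poch_zero']
  | succ m ih =>
    rw [← add_assoc, poch_succ, ih, poch_succ]
    push_cast
    ring

lemma poch_ne_zero {q : ℂ} (h : ∀ n : ℕ, q ≠ -(n : ℂ)) (n : ℕ) : poch q n ≠ 0 := by
  induction n with
  | zero => simp [poch_zero']
  | succ n ih =>
    rw [poch_succ]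
    exact mul_ne_zero ih fun hq => h n (by linear_combination hq)

lemma norm_poch_le (q : ℂ) (n : ℕ) : ‖poch q n‖ ≤ (max ‖q‖ 1) ^ n * n.factorial := by
  induction n with
  | zero => simp [poch_zero']
  | succ n ih =>
    rw [poch_succ, norm_mul]
    have h1 : ‖q + n‖ ≤ ‖q‖ + n := (norm_add_le _ _).trans (by simp)
    have hM : ‖q‖ ≤ max ‖q‖ 1 := le_max_left _ _
    have hM1 : (1:ℝ) ≤ max ‖q‖ 1 := le_max_right _ _
    calc ‖poch q n‖ * ‖q + n‖ ≤ ((max ‖q‖ 1)^n * n.factorial) * (max ‖q‖ 1 * (n+1)) := by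
          refine mul_le_mul ih ?_ (norm_nonneg _) (by positivity)
          refine h1.trans ?_
          nlinarith [Nat.cast_nonneg (α := ℝ) n]
      _ = (max ‖q‖ 1)^(n+1) * (n+1).factorial := by
          rw [Nat.factorial_succ]; push_cast; ring

lemma poch_lower {q : ℂ} (h : ∀ n : ℕ, q ≠ -(n : ℂ)) :
    ∃ K : ℝ, 0 < K ∧ ∀ m : ℕ, (m.factorial : ℝ) ≤ K * (4 ^ m * ‖poch q m‖) := by
  set D : ℕ → ℝ := fun m => 4 ^ m * ‖poch q m‖ with hD
  have hDpos : ∀ m, 0 < D m := fun m => by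
    have h2 : 0 < ‖poch q m‖ := norm_pos_iff.mpr (poch_ne_zero h m)
    positivity
  set J : ℕ := ⌈2 * ‖q‖⌉₊ + 1 with hJ
  have hJq : 2 * ‖q‖ < J := by
    have := Nat.le_ceil (2 * ‖q‖)
    push_cast [hJ]
    linarith
  have key : ∀ m, J ≤ m → (m.factorial : ℝ) * D J ≤ (J.factorial : ℝ) * D m := by
    intro m hm
    induction m, hm using Nat.le_induction with
    | base => rw [mul_comm]
    | succ m hm ih =>
      have hq4 : ((m:ℝ) + 1) ≤ 4 * ‖q + m‖ := by
        have h1 : (m:ℝ) - ‖q‖ ≤ ‖q + m‖ := by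
          have h2 := norm_add_le (q + (m:ℂ)) (-q)
          have h3 : q + (m:ℂ) + -q = (m:ℂ) := by ring
          rw [h3, norm_neg, Complex.norm_natCast] at h2
          linarith
        have hJm : (J:ℝ) ≤ m := by exact_mod_cast hm
        have hJ1 : (1:ℝ) ≤ (J:ℝ) := by
          have : 1 ≤ J := by omega
          exact_mod_cast this
        linarith
      have hfact : ((m+1).factorial : ℝ) = (m+1) * m.factorial := by
        rw [Nat.factorial_succ]; push_cast; ring
      have hpoch : D (m+1) = D m * (4 * ‖q + m‖) := by
        simp only [hD, poch_succ, norm_mul, pow_succ]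
        ring
      rw [hfact, hpoch]
      calc ((m:ℝ)+1) * m.factorial * D J ≤ ((m:ℝ)+1) * ((J.factorial : ℝ) * D m) := by
            have := mul_le_mul_of_nonneg_left ih (by positivity : (0:ℝ) ≤ (m:ℝ)+1)
            linarith [this]
        _ ≤ (J.factorial : ℝ) * (D m * (4 * ‖q + m‖)) := by
            have h1 : ((m:ℝ)+1) * ((J.factorial : ℝ) * D m) = ((J.factorial : ℝ) * D m) * ((m:ℝ)+1) := by ring
            rw [h1]
            have h2 : (J.factorial : ℝ) * (D m * (4 * ‖q + m‖)) = ((J.factorial : ℝ) * D m) * (4 * ‖q + m‖) := by ring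
            rw [h2]
            exact mul_le_mul_of_nonneg_left hq4 (by positivity)
  set K : ℝ := (Finset.range (J+1)).sup' (by simp) (fun m => (m.factorial : ℝ) / D m) with hK
  have hle : ∀ m, m ≤ J → (m.factorial : ℝ) / D m ≤ K :=
    fun m hm => Finset.le_sup' (fun m => (m.factorial : ℝ) / D m)
      (Finset.mem_range.mpr (Nat.lt_succ_of_le hm))
  have hK0 : 0 < K := by
    have := hle 0 (by omega)
    have h0 : ((Nat.factorial 0 : ℕ) : ℝ) / D 0 = 1 := by simp [hD, poch_zero']
    rw [h0] at this
    linarith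
  refine ⟨K, hK0, fun m => ?_⟩
  show (m.factorial : ℝ) ≤ K * D m
  rcases le_or_gt m J with hm | hm
  · have := hle m hm
    rw [div_le_iff₀ (hDpos m)] at this
    linarith
  · have h1 := key m hm.le
    have h2 := hle J le_rfl
    rw [div_le_iff₀ (hDpos J)] at h2
    have h3 : (m.factorial : ℝ) ≤ (J.factorial : ℝ) / D J * D m := by
      rw [div_mul_eq_mul_div, le_div_iff₀ (hDpos J)]
      linarith
    have h4 : (J.factorial : ℝ) / D J ≤ K := by
      rw [div_le_iff₀ (hDpos J)]; linarith
    have := mul_le_mul_of_nonneg_right h4 (hDpos m).le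
    linarith

lemma choose_le_two_pow' (n i : ℕ) : n.choose i ≤ 2 ^ n := by
  rcases le_or_gt i n with h | h
  · calc n.choose i ≤ ∑ m ∈ Finset.range (n+1), n.choose m :=
        Finset.single_le_sum (fun _ _ => Nat.zero_le _) (Finset.mem_range.mpr (by omega))
      _ = 2 ^ n := Nat.sum_range_choose n
  · rw [Nat.choose_eq_zero_of_lt h]; positivity

lemma fact_add_le (m k : ℕ) :
    (((m+k).factorial : ℕ) : ℝ) ≤ 2^(m+k) * (m.factorial * k.factorial) := by
  have h1 : (m+k).choose m * m.factorial * k.factorial = (m+k).factorial := by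
    have := Nat.choose_mul_factorial_mul_factorial (Nat.le_add_right m k)
    simpa using this
  have h2 : (m+k).choose m ≤ 2^(m+k) := choose_le_two_pow' _ _
  have : (m+k).factorial ≤ 2^(m+k) * (m.factorial * k.factorial) := by
    calc (m+k).factorial = (m+k).choose m * m.factorial * k.factorial := h1.symm
      _ ≤ 2^(m+k) * m.factorial * k.factorial := by
          exact Nat.mul_le_mul_right _ (Nat.mul_le_mul_right _ h2)
      _ = 2^(m+k) * (m.factorial * k.factorial) := by ring
  exact_mod_cast this

lemma summable_exp2 {u : ℝ} (hu : 0 ≤ u) (C : ℝ) :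
    Summable (fun p : ℕ × ℕ => C * (u^p.1 / p.1.factorial) * (u^p.2 / p.2.factorial)) := by
  have h := (Real.summable_pow_div_factorial u).mul_of_nonneg
    (Real.summable_pow_div_factorial u) (fun n => by positivity) (fun n => by positivity)
  simpa [mul_assoc] using h.mul_left C

lemma summable_exp3 {u : ℝ} (hu : 0 ≤ u) (C : ℝ) :
    Summable (fun p : ℕ × ℕ × ℕ =>
      C * (u^p.1 / p.1.factorial) * (u^p.2.1 / p.2.1.factorial) * (u^p.2.2 / p.2.2.factorial)) := by
  have h2 := (Real.summable_pow_div_factorial u).mul_of_nonneg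
    (Real.summable_pow_div_factorial u) (fun n => by positivity) (fun n => by positivity)
  have h3 := (Real.summable_pow_div_factorial u).mul_of_nonneg h2
    (fun n => by positivity) (fun p => by positivity)
  have := h3.mul_left C
  refine this.congr fun p => ?_
  ring

lemma psi2_summable (a b c x y : ℂ) (hb : ∀ n : ℕ, b ≠ -(n : ℂ)) (hc : ∀ n : ℕ, c ≠ -(n : ℂ)) :
    Summable (fun p : ℕ × ℕ => poch a (p.1 + p.2) * x ^ p.1 * y ^ p.2 /
      ((p.1.factorial : ℂ) * (p.2.factorial : ℂ) * poch b p.1 * poch c p.2)) := by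
  obtain ⟨Kb, hKb0, hKb⟩ := poch_lower hb
  obtain ⟨Kc, hKc0, hKc⟩ := poch_lower hc
  set M : ℝ := max ‖a‖ 1 with hM
  set r : ℝ := max (max ‖x‖ ‖y‖) 1 with hr
  have hM1 : (1:ℝ) ≤ M := le_max_right _ _
  have hr1 : (1:ℝ) ≤ r := le_max_right _ _
  have hxr : ‖x‖ ≤ r := le_trans (le_max_left _ _) (le_max_left _ _)
  have hyr : ‖y‖ ≤ r := le_trans (le_max_right _ _) (le_max_left _ _)
  set u : ℝ := 8 * (M * r) with hu
  have hupow : ∀ n : ℕ, u ^ n = 2^n * 4^n * M^n * r^n := by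
    intro n
    rw [hu, show (8:ℝ) * (M*r) = 2*4*M*r by ring, mul_pow, mul_pow, mul_pow]
  apply Summable.of_norm
  apply Summable.of_nonneg_of_le (fun p => norm_nonneg _) ?_
    (summable_exp2 (u := u) (by positivity) (Kb * Kc))
  rintro ⟨m, k⟩
  have hBm : 0 < ‖poch b m‖ := norm_pos_iff.mpr (poch_ne_zero hb m)
  have hCk : 0 < ‖poch c k‖ := norm_pos_iff.mpr (poch_ne_zero hc k)
  have hFm : (0:ℝ) < m.factorial := by exact_mod_cast m.factorial_pos
  have hFk : (0:ℝ) < k.factorial := by exact_mod_cast k.factorial_pos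
  simp only [norm_div, norm_mul, norm_pow, Complex.norm_natCast]
  rw [div_le_iff₀ (by positivity)]
  calc ‖poch a (m+k)‖ * ‖x‖^m * ‖y‖^k
      ≤ (M^(m+k) * (m+k).factorial) * r^m * r^k := by
        gcongr ?_ * ?_ * ?_
        · exact norm_poch_le a (m+k)
        · exact pow_le_pow_left₀ (norm_nonneg x) hxr m
        · exact pow_le_pow_left₀ (norm_nonneg y) hyr k
    _ ≤ (M^(m+k) * (2^(m+k) * ((m.factorial : ℝ) * k.factorial))) * r^m * r^k := by
        gcongr
        exact fact_add_le m k
    _ ≤ (M^(m+k) * (2^(m+k) * ((Kb * (4^m * ‖poch b m‖)) * (Kc * (4^k * ‖poch c k‖))))) * r^m * r^k := by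
        gcongr
        · exact hKb m
        · exact hKc k
    _ = Kb * Kc * (u^m / m.factorial) * (u^k / k.factorial) *
          ((m.factorial : ℝ) * k.factorial * ‖poch b m‖ * ‖poch c k‖) := by
        field_simp
        rw [hupow m, hupow k, pow_add M, pow_add (2:ℝ)]
        ring

lemma F_summable (a b c x y χ : ℂ) (hb : ∀ n : ℕ, b ≠ -(n : ℂ)) (hc : ∀ n : ℕ, c ≠ -(n : ℂ)) :
    Summable (fun p : ℕ × ℕ × ℕ => poch a (p.1 + (p.2.1 + p.2.2)) * x ^ p.2.1 * y ^ p.2.2 * χ ^ p.1 /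
      ((p.2.1.factorial : ℂ) * (p.2.2.factorial : ℂ) * (p.1.factorial : ℂ) *
        poch b p.2.1 * poch c (p.1 + p.2.2))) := by
  obtain ⟨Kb, hKb0, hKb⟩ := poch_lower hb
  obtain ⟨Kc, hKc0, hKc⟩ := poch_lower hc
  set M : ℝ := max ‖a‖ 1 with hM
  set r : ℝ := max (max ‖x‖ ‖y‖) (max ‖χ‖ 1) with hr
  have hM1 : (1:ℝ) ≤ M := le_max_right _ _
  have hr1 : (1:ℝ) ≤ r := le_trans (le_max_right _ _) (le_max_right _ _)
  have hxr : ‖x‖ ≤ r := le_trans (le_max_left _ _) (le_max_left _ _)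
  have hyr : ‖y‖ ≤ r := le_trans (le_max_right _ _) (le_max_left _ _)
  have hχr : ‖χ‖ ≤ r := le_trans (le_max_left _ _) (le_max_right _ _)
  set u : ℝ := 8 * (M * r) with hu
  have hupow : ∀ n : ℕ, u ^ n = 2^n * 4^n * M^n * r^n := by
    intro n
    rw [hu, show (8:ℝ) * (M*r) = 2*4*M*r by ring, mul_pow, mul_pow, mul_pow]
  apply Summable.of_norm
  apply Summable.of_nonneg_of_le (fun p => norm_nonneg _) ?_
    (summable_exp3 (u := u) (by positivity) (Kb * Kc))
  rintro ⟨l, m, k⟩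
  have hBm : 0 < ‖poch b m‖ := norm_pos_iff.mpr (poch_ne_zero hb m)
  have hClk : 0 < ‖poch c (l + k)‖ := norm_pos_iff.mpr (poch_ne_zero hc (l + k))
  have hFm : (0:ℝ) < m.factorial := by exact_mod_cast m.factorial_pos
  have hFk : (0:ℝ) < k.factorial := by exact_mod_cast k.factorial_pos
  have hFl : (0:ℝ) < l.factorial := by exact_mod_cast l.factorial_pos
  simp only [norm_div, norm_mul, norm_pow, Complex.norm_natCast]
  rw [div_le_iff₀ (by positivity)]
  have hNfact : (((l + (m + k)).factorial : ℕ) : ℝ) ≤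
      2^(l+(m+k)) * ((m.factorial : ℝ) * (l+k).factorial) := by
    rw [show l + (m + k) = m + (l + k) from by ring]
    exact fact_add_le m (l+k)
  calc ‖poch a (l+(m+k))‖ * ‖x‖^m * ‖y‖^k * ‖χ‖^l
      ≤ (M^(l+(m+k)) * (l+(m+k)).factorial) * r^m * r^k * r^l := by
        gcongr ?_ * ?_ * ?_ * ?_
        · exact norm_poch_le a (l+(m+k))
        · exact pow_le_pow_left₀ (norm_nonneg x) hxr m
        · exact pow_le_pow_left₀ (norm_nonneg y) hyr k
        · exact pow_le_pow_left₀ (norm_nonneg χ) hχr l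
    _ ≤ (M^(l+(m+k)) * (2^(l+(m+k)) * ((m.factorial : ℝ) * (l+k).factorial))) * r^m * r^k * r^l := by
        gcongr
    _ ≤ (M^(l+(m+k)) * (2^(l+(m+k)) * ((Kb * (4^m * ‖poch b m‖)) *
          (Kc * (4^(l+k) * ‖poch c (l+k)‖))))) * r^m * r^k * r^l := by
        gcongr
        · exact hKb m
        · exact hKc (l+k)
    _ = Kb * Kc * (u^l / l.factorial) * (u^m / m.factorial) * (u^k / k.factorial) *
          ((m.factorial : ℝ) * k.factorial * l.factorial * ‖poch b m‖ * ‖poch c (l+k)‖) := by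
        field_simp
        rw [hupow l, hupow m, hupow k]
        simp only [pow_add]
        ring

def eqv : (Σ p : ℕ × ℕ, Fin (p.2 + 1)) ≃ ℕ × ℕ × ℕ where
  toFun q := ((q.2 : ℕ), (q.1.1, q.1.2 - (q.2 : ℕ)))
  invFun p := ⟨(p.2.1, p.1 + p.2.2), ⟨p.1, by omega⟩⟩
  left_inv := by
    rintro ⟨⟨m, n⟩, ⟨i, hi⟩⟩
    obtain ⟨k, rfl⟩ : ∃ k, n = i + k := ⟨n - i, by omega⟩
    refine Sigma.ext ?_ ?_
    · show ((m, i + (i + k - i)) : ℕ × ℕ) = (m, i + k)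
      have : i + (i + k - i) = i + k := by omega
      rw [this]
    · rw [Fin.heq_ext_iff (by show i + (i + k - i) + 1 = i + k + 1; omega)]
  right_inv := by
    rintro ⟨l, m, k⟩
    simp

lemma binom_sum (y χ : ℂ) (n : ℕ) :
    ∑ i ∈ Finset.range (n+1), y^(n-i) * χ^i / (((n-i).factorial : ℂ) * (i.factorial : ℂ))
      = (y + χ)^n / n.factorial := by
  have hn : ((n.factorial : ℕ) : ℂ) ≠ 0 := Nat.cast_ne_zero.mpr n.factorial_ne_zero
  rw [eq_div_iff hn, show y + χ = χ + y from by ring, add_pow, Finset.sum_mul]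
  refine Finset.sum_congr rfl fun i hi => ?_
  have hile : i ≤ n := by
    have := Finset.mem_range.mp hi; omega
  have hcast : ((n.choose i : ℕ) : ℂ) * (i.factorial : ℕ) * (((n-i).factorial : ℕ) : ℂ) =
      ((n.factorial : ℕ) : ℂ) := by
    exact_mod_cast congrArg (Nat.cast : ℕ → ℂ) (Nat.choose_mul_factorial_mul_factorial hile)
  have h1 : (((n-i).factorial : ℕ) : ℂ) ≠ 0 := Nat.cast_ne_zero.mpr (n-i).factorial_ne_zero
  have h2 : ((i.factorial : ℕ) : ℂ) ≠ 0 := Nat.cast_ne_zero.mpr i.factorial_ne_zero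
  rw [div_mul_eq_mul_div, eq_comm, eq_div_iff (mul_ne_zero h1 h2)]
  linear_combination (χ ^ i * y ^ (n - i)) * hcast

theorem stmt19 (a b c x y χ : ℂ) (hb : ∀ n : ℕ, b ≠ -(n : ℂ)) (hc : ∀ n : ℕ, c ≠ -(n : ℂ)) :
    HasSum (fun ℓ : ℕ => poch a ℓ / ((ℓ.factorial : ℂ) * poch c ℓ) * psi2 (a + ℓ) b (c + ℓ) x y * χ ^ ℓ)
      (psi2 a b c x (y + χ)) := by
  classical
  set F : ℕ × ℕ × ℕ → ℂ := fun p =>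
    poch a (p.1 + (p.2.1 + p.2.2)) * x ^ p.2.1 * y ^ p.2.2 * χ ^ p.1 /
      ((p.2.1.factorial : ℂ) * (p.2.2.factorial : ℂ) * (p.1.factorial : ℂ) *
        poch b p.2.1 * poch c (p.1 + p.2.2)) with hFdef
  have hF : Summable F := F_summable a b c x y χ hb hc
  have stepA : ∀ l : ℕ, HasSum (fun p : ℕ × ℕ => F (l, p))
      (poch a l / ((l.factorial : ℂ) * poch c l) * psi2 (a + l) b (c + l) x y * χ ^ l) := by
    intro l
    have hc' : ∀ n : ℕ, c + (l : ℂ) ≠ -(n : ℂ) := fun n h =>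
      hc (n + l) (by push_cast; linear_combination h)
    have hin : HasSum (fun p : ℕ × ℕ => poch (a + l) (p.1 + p.2) * x ^ p.1 * y ^ p.2 /
        ((p.1.factorial : ℂ) * (p.2.factorial : ℂ) * poch b p.1 * poch (c + l) p.2))
        (psi2 (a + l) b (c + l) x y) := (psi2_summable (a+l) b (c+l) x y hb hc').hasSum
    have h2 := hin.mul_left (poch a l * χ ^ l / ((l.factorial : ℂ) * poch c l))
    have hfun : (fun p : ℕ × ℕ => F (l, p)) = (fun p : ℕ × ℕ =>
        poch a l * χ ^ l / ((l.factorial : ℂ) * poch c l) *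
        (poch (a + l) (p.1 + p.2) * x ^ p.1 * y ^ p.2 /
          ((p.1.factorial : ℂ) * (p.2.factorial : ℂ) * poch b p.1 * poch (c + l) p.2))) := by
      funext p
      obtain ⟨m, k⟩ := p
      show poch a (l + (m + k)) * x ^ m * y ^ k * χ ^ l /
          ((m.factorial : ℂ) * (k.factorial : ℂ) * (l.factorial : ℂ) *
            poch b m * poch c (l + k)) = _
      rw [poch_add a l (m+k), poch_add c l k]
      have e1 : ((m.factorial : ℕ) : ℂ) ≠ 0 := Nat.cast_ne_zero.mpr m.factorial_ne_zero
      have e2 : ((k.factorial : ℕ) : ℂ) ≠ 0 := Nat.cast_ne_zero.mpr k.factorial_ne_zero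
      have e3 : ((l.factorial : ℕ) : ℂ) ≠ 0 := Nat.cast_ne_zero.mpr l.factorial_ne_zero
      have e4 : poch b m ≠ 0 := poch_ne_zero hb m
      have e5 : poch c l ≠ 0 := poch_ne_zero hc l
      have e6 : poch (c + l) k ≠ 0 := poch_ne_zero hc' k
      field_simp
    rw [show poch a l / ((l.factorial : ℂ) * poch c l) * psi2 (a + l) b (c + l) x y * χ ^ l
        = poch a l * χ ^ l / ((l.factorial : ℂ) * poch c l) * psi2 (a + l) b (c + l) x y from by
          ring, hfun]
    exact h2
  have hB : HasSum (fun l : ℕ => poch a l / ((l.factorial : ℂ) * poch c l) *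
      psi2 (a + l) b (c + l) x y * χ ^ l) (∑' p, F p) :=
    HasSum.prod_fiberwise hF.hasSum stepA
  have hG : HasSum (F ∘ eqv) (∑' p, F p) := (Equiv.hasSum_iff eqv).mpr hF.hasSum
  have fibers : ∀ p : ℕ × ℕ, HasSum (fun i : Fin (p.2 + 1) => (F ∘ eqv) ⟨p, i⟩)
      (poch a (p.1 + p.2) * x ^ p.1 * (y + χ) ^ p.2 /
        ((p.1.factorial : ℂ) * (p.2.factorial : ℂ) * poch b p.1 * poch c p.2)) := by
    rintro ⟨m, n⟩
    have h := hasSum_fintype (fun i : Fin (n+1) => (F ∘ eqv) ⟨(m, n), i⟩)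
    have key : ∑ i : Fin (n+1), (F ∘ eqv) ⟨(m, n), i⟩
        = poch a (m + n) * x ^ m * (y + χ) ^ n /
          ((m.factorial : ℂ) * (n.factorial : ℂ) * poch b m * poch c n) := by
      have e4 : poch b m ≠ 0 := poch_ne_zero hb m
      have e5 : poch c n ≠ 0 := poch_ne_zero hc n
      have e1 : ((m.factorial : ℕ) : ℂ) ≠ 0 := Nat.cast_ne_zero.mpr m.factorial_ne_zero
      have e2 : ((n.factorial : ℕ) : ℂ) ≠ 0 := Nat.cast_ne_zero.mpr n.factorial_ne_zero
      calc ∑ i : Fin (n+1), (F ∘ eqv) ⟨(m, n), i⟩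
          = ∑ j ∈ Finset.range (n+1), F (j, (m, n - j)) :=
            Fin.sum_univ_eq_sum_range (fun j => F (j, (m, n - j))) (n+1)
        _ = ∑ j ∈ Finset.range (n+1),
            (poch a (m + n) * x ^ m / ((m.factorial : ℂ) * poch b m * poch c n)) *
              (y ^ (n - j) * χ ^ j / ((((n-j).factorial : ℕ) : ℂ) * ((j.factorial : ℕ) : ℂ))) := by
            refine Finset.sum_congr rfl fun j hj => ?_
            have hjn : j ≤ n := by have := Finset.mem_range.mp hj; omega
            have h1 : j + (m + (n - j)) = m + n := by omega
            have h2 : j + (n - j) = n := by omega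
            show poch a (j + (m + (n - j))) * x ^ m * y ^ (n - j) * χ ^ j /
              ((m.factorial : ℂ) * ((n-j).factorial : ℂ) * (j.factorial : ℂ) *
                poch b m * poch c (j + (n - j))) = _
            rw [h1, h2]
            simp only [div_eq_mul_inv, mul_inv]
            ring
        _ = (poch a (m + n) * x ^ m / ((m.factorial : ℂ) * poch b m * poch c n)) *
              ((y + χ) ^ n / (n.factorial : ℂ)) := by
            rw [← Finset.mul_sum, binom_sum]
        _ = poch a (m + n) * x ^ m * (y + χ) ^ n /
              ((m.factorial : ℂ) * (n.factorial : ℂ) * poch b m * poch c n) := by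
            simp only [div_eq_mul_inv, mul_inv]
            ring
    rw [key] at h
    exact h
  have hT : HasSum (fun p : ℕ × ℕ => poch a (p.1 + p.2) * x ^ p.1 * (y + χ) ^ p.2 /
      ((p.1.factorial : ℂ) * (p.2.factorial : ℂ) * poch b p.1 * poch c p.2)) (∑' p, F p) :=
    hG.sigma fibers
  have hpsi : psi2 a b c x (y + χ) = ∑' p, F p := hT.tsum_eq
  rw [hpsi]
  exact hB
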